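/- Let S be a finite set, let f_a, f_b : S → {0,1}, and let τ be a permutation of S. Then δ(τ; f_a, f_b) is an integer i, and the matrix μ(f_a∘τ, f_b) − μ(f_a, f_b) has entries: the (0,0) entry is −i, the (0,1) entry is i, the (1,0) entry is i, and the (1,1) entry is −i. -/

import Mathlib

open Finset

/-- Unordered pairs of distinct vertices of `[n]`. -/
abbrev VPairs (n : ℕ) := {e : Sym2 (Fin n) // ¬ e.IsDiag}

/-- A graph on `[n]`, identified with its edge-indicator function. -/
abbrev BGraph (n : ℕ) := VPairs n → Bool

/-- The permutation of vertex pairs induced by a permutation of vertices. -/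
def pairPerm {n : ℕ} (π : Equiv.Perm (Fin n)) : Equiv.Perm (VPairs n) where
  toFun e := ⟨e.val.map π, fun h => e.prop ((Sym2.isDiag_map π.injective).mp h)⟩
  invFun e := ⟨e.val.map π.symm, fun h => e.prop ((Sym2.isDiag_map π.symm.injective).mp h)⟩
  left_inv e := by
    ext1
    simp [Sym2.map_map]
  right_inv e := by
    ext1
    simp [Sym2.map_map]

/-- Hamming distance between two labelings. -/
def hamming {S : Type*} [Fintype S] [DecidableEq S] (f g : S → Bool) : ℕ :=
  (Finset.univ.filter fun e => f e ≠ g e).card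

/-- `δ(τ; f, g) = (Δ(f∘τ, g) − Δ(f, g))/2`, as a rational number. -/
def deltaQ {S : Type*} [Fintype S] [DecidableEq S] (τ : Equiv.Perm S) (f g : S → Bool) : ℚ :=
  (((hamming (f ∘ τ) g : ℚ)) - (hamming f g : ℚ)) / 2

/-- The entry `(i,j)` of the type `μ(f,g)`. -/
def typeCount {S : Type*} [Fintype S] [DecidableEq S] (f g : S → Bool) (i j : Bool) : ℕ :=
  (Finset.univ.filter fun e => f e = i ∧ g e = j).card

/-- The joint edge distribution determined by a probability vector. -/
def pv (p11 p10 p01 p00 : ℝ) : Bool → Bool → ℝ :=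
  fun a b => if a then (if b then p11 else p10) else (if b then p01 else p00)

open Classical in
/-- The probability of an event under the correlated Erdős–Rényi model `ER(n,p)`. -/
noncomputable def ERprob (n : ℕ) (p : Bool → Bool → ℝ)
    (E : BGraph n × BGraph n → Prop) : ℝ :=
  ∑ gab : BGraph n × BGraph n,
    (if E gab then (1 : ℝ) else 0) * ∏ e : VPairs n, p (gab.1 e) (gab.2 e)

open Classical in
/-- The probability of an event under the joint distribution of a uniformly random
permutation `Π` of `[n]` together with `(G_a, G_b) ~ ER(n,p)` independent of it. -/
noncomputable def ERPermProb (n : ℕ) (p : Bool → Bool → ℝ)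
    (E : Equiv.Perm (Fin n) → BGraph n × BGraph n → Prop) : ℝ :=
  (∑ π : Equiv.Perm (Fin n), ∑ gab : BGraph n × BGraph n,
    (if E π gab then (1 : ℝ) else 0) * ∏ e : VPairs n, p (gab.1 e) (gab.2 e))
    / (Nat.factorial n)

/-- The anonymized graph `G_c`, determined by `G_c(l(Π)(e)) = G_a(e)`. -/
def anonymize {n : ℕ} (π : Equiv.Perm (Fin n)) (ga : BGraph n) : BGraph n :=
  fun e => ga ((pairPerm π).symm e)

/-- `S_{n,nt}`: the permutations of `[n]` with exactly `nt` non-fixed points. -/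
def Snn (n nt : ℕ) : Finset (Equiv.Perm (Fin n)) :=
  Finset.univ.filter fun π => (Finset.univ.filter fun x => π x ≠ x).card = nt

open Classical in
/-- The generating function `A_{S,τ}(w,z)`; here `z^δ` is expressed as `√z^(2δ)`. -/
noncomputable def AgF {S : Type*} [Fintype S] (τ : Equiv.Perm S)
    (w : Bool → Bool → ℝ) (z : ℝ) : ℝ :=
  ∑ g : S → Bool, ∑ h : S → Bool,
    (Real.sqrt z) ^ ((hamming (g ∘ τ) h : ℤ) - (hamming g h : ℤ)) *
      ∏ i : Bool, ∏ j : Bool, w i j ^ typeCount g h i j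

/-- `a_ℓ(w,z)`: the generating function of a single cycle of length `ℓ`. -/
noncomputable def aGF (ℓ : ℕ) (w : Bool → Bool → ℝ) (z : ℝ) : ℝ :=
  AgF (finRotate ℓ) w z

open Classical in
/-- The number of cycles of length `ℓ` in the cycle decomposition of `τ`
(the number of points whose `τ`-orbit has size `ℓ`, divided by `ℓ`). -/
noncomputable def cycleCount {S : Type*} [Fintype S] (τ : Equiv.Perm S) (ℓ : ℕ) : ℕ :=
  (Finset.univ.filter fun x : S =>
    (Finset.univ.filter fun y : S => τ.SameCycle x y).card = ℓ).card / ℓ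

open Classical in
/-- The probability of an event under an Erdős–Rényi graph `G(n,p)`. -/
noncomputable def ERgraphProb (n : ℕ) (p : ℝ) (E : BGraph n → Prop) : ℝ :=
  ∑ g : BGraph n,
    (if E g then (1 : ℝ) else 0) * ∏ e : VPairs n, (if g e then p else 1 - p)

open Classical in
/-- The number of automorphisms of a graph. -/
noncomputable def autCard {n : ℕ} (g : BGraph n) : ℕ :=
  (Finset.univ.filter fun π : Equiv.Perm (Fin n) =>
    ∀ e : VPairs n, g (pairPerm π e) = g e).card

/-!
Precomposing `f` with a permutation leaves the row sums `#{e | f e = i}` of the type `μ(f, g)`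
unchanged, and the column sums `#{e | g e = j}` do not involve `f` at all. So the difference
`μ(f ∘ τ, g) - μ(f, g)` is a 2×2 integer matrix with zero row and column sums, i.e. of the
form `[[-i, i], [i, -i]]`; as the Hamming distance is the off-diagonal sum of the type, `Δ`
changes by `2i`.
-/
section TypeCount

variable {S : Type*} [Fintype S] [DecidableEq S]

theorem typeCount_row_sum (f g : S → Bool) (i : Bool) :
    typeCount f g i false + typeCount f g i true = #{e | f e = i} := by
  simp only [typeCount, card_filter, ← sum_add_distrib]
  refine sum_congr rfl fun e _ => ?_
  cases f e <;> cases g e <;> cases i <;> rfl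

theorem typeCount_col_sum (f g : S → Bool) (j : Bool) :
    typeCount f g false j + typeCount f g true j = #{e | g e = j} := by
  simp only [typeCount, card_filter, ← sum_add_distrib]
  refine sum_congr rfl fun e _ => ?_
  cases f e <;> cases g e <;> cases j <;> rfl

theorem hamming_eq_typeCount (f g : S → Bool) :
    hamming f g = typeCount f g true false + typeCount f g false true := by
  simp only [hamming, typeCount, card_filter, ← sum_add_distrib]
  refine sum_congr rfl fun e _ => ?_
  cases f e <;> cases g e <;> rfl

theorem typeCount_comp_perm_row_sum (f g : S → Bool) (τ : Equiv.Perm S) (i : Bool) :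
    typeCount (f ∘ τ) g i false + typeCount (f ∘ τ) g i true =
      typeCount f g i false + typeCount f g i true := by
  simp only [typeCount_row_sum, Function.comp_apply, card_filter]
  exact Equiv.sum_comp τ fun e => if f e = i then 1 else 0

theorem typeCount_col_sum_eq (f₁ f₂ g : S → Bool) (j : Bool) :
    typeCount f₁ g false j + typeCount f₁ g true j =
      typeCount f₂ g false j + typeCount f₂ g true j := by
  rw [typeCount_col_sum, typeCount_col_sum]

end TypeCount

/-- the type difference lemma. -/
theorem type_diff {S : Type*} [Fintype S] [DecidableEq S]
    (fa fb : S → Bool) (τ : Equiv.Perm S) :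
    ∃ i : ℤ,
      deltaQ τ fa fb = (i : ℚ) ∧
      (typeCount (fa ∘ τ) fb false false : ℤ) - (typeCount fa fb false false : ℤ) = -i ∧
      (typeCount (fa ∘ τ) fb false true : ℤ) - (typeCount fa fb false true : ℤ) = i ∧
      (typeCount (fa ∘ τ) fb true false : ℤ) - (typeCount fa fb true false : ℤ) = i ∧
      (typeCount (fa ∘ τ) fb true true : ℤ) - (typeCount fa fb true true : ℤ) = -i := by
  have row₀ := typeCount_comp_perm_row_sum fa fb τ false
  have col₀ := typeCount_col_sum_eq (fa ∘ τ) fa fb false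
  have col₁ := typeCount_col_sum_eq (fa ∘ τ) fa fb true
  refine ⟨(typeCount (fa ∘ τ) fb false true : ℤ) - typeCount fa fb false true,
    ?_, by omega, rfl, by omega, by omega⟩
  qify at row₀ col₀ col₁
  rw [deltaQ, hamming_eq_typeCount, hamming_eq_typeCount]
  push_cast
  linarith
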